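/- Let Ω be a nonempty finite set, A, B subsets of Ω with A ∪ B nonempty. The number of permutations σ of Ω such that the σ-minimal element of A ∪ B lies in A ∩ B equals |A ∩ B| · |Ω|! / |A ∪ B| (in particular, |A ∪ B| divides |A ∩ B| · |Ω|!), obtained by summing over each x ∈ A ∩ B the count |Ω|!/|A ∪ B| of permutations making x the σ-minimal element of A ∪ B. -/

import Mathlib

/-!
Composing with the transposition `swap x y` exchanges the permutations whose minimal element
of `A ∪ B` is `x` with those whose minimal element is `y`, so all `|A ∪ B|` fibres of
`σ ↦ minUnder σ (A ∪ B) h` have the same size `|Ω|! / |A ∪ B|`. Summing over the fibres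
indexed by `A ∩ B` gives the count.
-/

/-- The `σ`-minimal element of a nonempty finite set `A` of communities,
i.e. the `x ∈ A` minimizing the rank `σ x`. -/
def minUnder {Ω : Type*} [LinearOrder Ω] (σ : Equiv.Perm Ω) (A : Finset Ω)
    (h : A.Nonempty) : Ω :=
  σ.symm ((A.image σ).min' (h.image σ))

open Finset Nat

section LinearOrder

variable {Ω : Type*} [LinearOrder Ω] (σ : Equiv.Perm Ω) (A : Finset Ω) (h : A.Nonempty)

lemma minUnder_mem : minUnder σ A h ∈ A := by
  obtain ⟨a, ha, hσa⟩ := mem_image.mp ((A.image σ).min'_mem (h.image σ))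
  rwa [minUnder, ← hσa, Equiv.symm_apply_apply]

lemma minUnder_le {y : Ω} (hy : y ∈ A) : σ (minUnder σ A h) ≤ σ y := by
  rw [minUnder, Equiv.apply_symm_apply]
  exact min'_le _ _ (mem_image_of_mem σ hy)

lemma minUnder_eq_iff (x : Ω) : minUnder σ A h = x ↔ x ∈ A ∧ ∀ y ∈ A, σ x ≤ σ y := by
  refine ⟨?_, fun ⟨hx, hmin⟩ => ?_⟩
  · rintro rfl
    exact ⟨minUnder_mem σ A h, fun y hy => minUnder_le σ A h hy⟩
  · exact σ.injective <| le_antisymm (minUnder_le σ A h hx) (hmin _ (minUnder_mem σ A h))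

lemma minUnder_mul_swap {x y : Ω} (hx : x ∈ A) (hy : y ∈ A) :
    minUnder (σ * Equiv.swap x y) A h = Equiv.swap x y (minUnder σ A h) := by
  have swap_mem : ∀ z ∈ A, Equiv.swap x y z ∈ A := fun z hz =>
    (Equiv.swap_bijOn_self (s := (A : Set Ω)) (iff_of_true hx hy)).mapsTo hz
  rw [minUnder_eq_iff]
  refine ⟨swap_mem _ (minUnder_mem σ A h), fun z hz => ?_⟩
  rw [Equiv.Perm.mul_apply, Equiv.swap_apply_self]
  exact minUnder_le σ A h (swap_mem z hz)

end LinearOrder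

section Fintype

variable {Ω : Type*} [LinearOrder Ω] [Fintype Ω] (A : Finset Ω) (h : A.Nonempty)

lemma card_filter_minUnder_eq_eq {x y : Ω} (hx : x ∈ A) (hy : y ∈ A) :
    #{σ : Equiv.Perm Ω | minUnder σ A h = x} = #{σ : Equiv.Perm Ω | minUnder σ A h = y} := by
  have swap_swap : ∀ σ : Equiv.Perm Ω, σ * Equiv.swap x y * Equiv.swap x y = σ := fun σ => by
    rw [mul_assoc, Equiv.swap_mul_self, mul_one]
  refine card_nbij' (· * Equiv.swap x y) (· * Equiv.swap x y) ?_ ?_ (fun σ _ => swap_swap σ)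
    (fun σ _ => swap_swap σ)
  · intro σ hσ
    simp only [coe_filter, mem_univ, true_and, Set.mem_ofPred_eq] at hσ ⊢
    rw [minUnder_mul_swap σ A h hx hy, hσ, Equiv.swap_apply_left]
  · intro σ hσ
    simp only [coe_filter, mem_univ, true_and, Set.mem_ofPred_eq] at hσ ⊢
    rw [minUnder_mul_swap σ A h hx hy, hσ, Equiv.swap_apply_right]

lemma card_filter_minUnder_mem {S : Finset Ω} (hS : S ⊆ A) {x : Ω} (hx : x ∈ A) :
    #{σ : Equiv.Perm Ω | minUnder σ A h ∈ S} = #S * #{σ : Equiv.Perm Ω | minUnder σ A h = x} := by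
  rw [card_eq_sum_card_fiberwise (s := {σ : Equiv.Perm Ω | minUnder σ A h ∈ S})
    (f := fun σ => minUnder σ A h) fun σ hσ => (mem_filter.mp hσ).2, ← smul_eq_mul, ← sum_const]
  refine sum_congr rfl fun y hy => ?_
  rw [filter_filter, ← card_filter_minUnder_eq_eq A h (hS hy) hx]
  congr 1
  exact filter_congr fun σ _ => ⟨And.right, fun hσ => ⟨hσ ▸ hy, hσ⟩⟩

lemma card_filter_minUnder_eq {x : Ω} (hx : x ∈ A) :
    #{σ : Equiv.Perm Ω | minUnder σ A h = x} = (Fintype.card Ω)! / #A := by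
  have hall : #{σ : Equiv.Perm Ω | minUnder σ A h ∈ A} = (Fintype.card Ω)! := by
    rw [filter_true_of_mem fun σ _ => minUnder_mem σ A h, Finset.card_univ,
      Fintype.card_perm]
  rw [← hall, card_filter_minUnder_mem A h subset_rfl hx,
    Nat.mul_div_cancel_left _ (card_pos.mpr h)]

end Fintype

theorem count_perms_min_of_union_in_inter_general {Ω : Type*} [Fintype Ω] [LinearOrder Ω]
    (A B : Finset Ω) (h : (A ∪ B).Nonempty) :
    ((A ∪ B).card ∣ (A ∩ B).card * (Fintype.card Ω).factorial) ∧
    ((Finset.univ.filter (fun σ : Equiv.Perm Ω => minUnder σ (A ∪ B) h ∈ A ∩ B)).card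
      = (A ∩ B).card * (Fintype.card Ω).factorial / (A ∪ B).card) ∧
    ((Finset.univ.filter (fun σ : Equiv.Perm Ω => minUnder σ (A ∪ B) h ∈ A ∩ B)).card
      = ∑ _x ∈ A ∩ B, (Fintype.card Ω).factorial / (A ∪ B).card) := by
  have hdvd : #(A ∪ B) ∣ (Fintype.card Ω)! :=
    Nat.dvd_factorial (card_pos.mpr h) (card_le_univ _)
  obtain ⟨x, hx⟩ := id h
  have hcount : #{σ : Equiv.Perm Ω | minUnder σ (A ∪ B) h ∈ A ∩ B}
      = #(A ∩ B) * ((Fintype.card Ω)! / #(A ∪ B)) := by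
    rw [card_filter_minUnder_mem _ h inter_subset_union hx,
      card_filter_minUnder_eq _ h hx]
  refine ⟨hdvd.mul_left _, ?_, ?_⟩
  · rw [hcount, Nat.mul_div_assoc _ hdvd]
  · rw [hcount, sum_const, smul_eq_mul]

/-- Let `Ω` be a nonempty finite set and `A, B` subsets of `Ω` with
`A ∪ B` nonempty. The number of permutations `σ` of `Ω` such that the `σ`-minimal element
of `A ∪ B` lies in `A ∩ B` equals `|A ∩ B| ⬝ |Ω|! / |A ∪ B|` (in particular, `|A ∪ B|`
divides `|A ∩ B| ⬝ |Ω|!`), obtained by summing, over each `x ∈ A ∩ B`, the count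
`|Ω|! / |A ∪ B|` of permutations making `x` the `σ`-minimal element of `A ∪ B`. -/
theorem count_perms_min_of_union_in_inter {Ω : Type*} [Fintype Ω] [LinearOrder Ω]
    [Nonempty Ω] (A B : Finset Ω) (h : (A ∪ B).Nonempty) :
    ((A ∪ B).card ∣ (A ∩ B).card * (Fintype.card Ω).factorial) ∧
    ((Finset.univ.filter (fun σ : Equiv.Perm Ω => minUnder σ (A ∪ B) h ∈ A ∩ B)).card
      = (A ∩ B).card * (Fintype.card Ω).factorial / (A ∪ B).card) ∧
    ((Finset.univ.filter (fun σ : Equiv.Perm Ω => minUnder σ (A ∪ B) h ∈ A ∩ B)).card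
      = ∑ _x ∈ A ∩ B, (Fintype.card Ω).factorial / (A ∪ B).card) :=
  count_perms_min_of_union_in_inter_general A B h
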